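/- Let n ≥ 1, let A, C be complex symmetric n×n matrices with Im C positive definite, and let B ∈ GL(n,ℂ). Set φ(x,η) = (1/2)(Ax)·x + (Bx)·η + (1/2)(Cη)·η for x, η ∈ ℂ^n. Then for each (x,y) ∈ ℂ^n × ℂ^n the holomorphic function η ↦ φ(x,η) − y·η has a unique critical point η₀ = C^{−1}(y − Bᵗ x), and the critical value ψ(x,y) := φ(x,η₀) − y·η₀ is a holomorphic quadratic form in (x,y) satisfying: (i) the matrix ∂²ψ/∂x∂y is invertible, and (ii) Im ∂²ψ/∂y∂y is positive definite. (Consequently, the composition of the FBI–Bargmann transform defined by φ with the Fourier transformation is again an FBI–Bargmann transform, with phase ψ.) -/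

import Mathlib

open MeasureTheory Matrix

noncomputable section

/-- the holomorphic quadratic FBI phase `φ(x,η) = ½(Ax)·x + (Bx)·η + ½(Cη)·η`. -/
def fbiPhase {n : ℕ} (A B C : Matrix (Fin n) (Fin n) ℂ) (x η : Fin n → ℂ) : ℂ :=
  (2⁻¹ : ℂ) * (A.mulVec x ⬝ᵥ x) + (B.mulVec x ⬝ᵥ η) + (2⁻¹ : ℂ) * (C.mulVec η ⬝ᵥ η)

namespace Stmt19Aux

variable {n : ℕ}

/-- `v ↦ w ⬝ᵥ v` as a continuous linear map. -/
def dotCLM (w : Fin n → ℂ) : (Fin n → ℂ) →L[ℂ] ℂ :=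
  LinearMap.toContinuousLinearMap
    { toFun := fun v => w ⬝ᵥ v
      map_add' := fun a b => dotProduct_add w a b
      map_smul' := fun c a => by simp [dotProduct_smul] }

@[simp] lemma dotCLM_apply (w v : Fin n → ℂ) : dotCLM w v = w ⬝ᵥ v := rfl

lemma dotCLM_eq_zero {w : Fin n → ℂ} (h : dotCLM w = 0) : w = 0 := by
  funext i
  have := congrArg (fun L : (Fin n → ℂ) →L[ℂ] ℂ => L (Pi.single i 1)) h
  simpa using this

lemma dotCLM_zero : dotCLM (0 : Fin n → ℂ) = 0 := by
  ext v; simp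

/-- `u ↦ (v ↦ (M *ᵥ u) ⬝ᵥ v)` as a continuous bilinear map. -/
def dotBil (M : Matrix (Fin n) (Fin n) ℂ) :
    (Fin n → ℂ) →L[ℂ] (Fin n → ℂ) →L[ℂ] ℂ :=
  LinearMap.toContinuousLinearMap
    { toFun := fun u => dotCLM (M.mulVec u)
      map_add' := fun a b => by ext v; simp [mulVec_add, add_dotProduct]
      map_smul' := fun c a => by ext v; simp [mulVec_smul, smul_dotProduct] }

@[simp] lemma dotBil_apply (M : Matrix (Fin n) (Fin n) ℂ) (u v : Fin n → ℂ) :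
    dotBil M u v = M.mulVec u ⬝ᵥ v := rfl

lemma symm_dot' {R : Type*} [CommRing R] (M : Matrix (Fin n) (Fin n) R) (hM : M.IsSymm)
    (u v : Fin n → R) : M *ᵥ u ⬝ᵥ v = M *ᵥ v ⬝ᵥ u := by
  rw [dotProduct_comm, dotProduct_mulVec, ← mulVec_transpose, hM.eq]

/-- explicit derivative of the perturbed phase. -/
lemma hasFDerivAt_phase (A B C : Matrix (Fin n) (Fin n) ℂ) (hC : C.IsSymm)
    (x y η₀ : Fin n → ℂ) :
    HasFDerivAt (fun η : Fin n → ℂ => fbiPhase A B C x η - y ⬝ᵥ η)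
      (dotCLM (C.mulVec η₀ + B.mulVec x - y)) η₀ := by
  have hquad : HasFDerivAt (fun η : Fin n → ℂ => dotBil C η η)
      ((dotBil C).precompR (Fin n → ℂ) η₀ (ContinuousLinearMap.id ℂ (Fin n → ℂ)) +
        (dotBil C).precompL (Fin n → ℂ) (ContinuousLinearMap.id ℂ (Fin n → ℂ)) η₀) η₀ :=
    (dotBil C).hasFDerivAt_of_bilinear (hasFDerivAt_id η₀) (hasFDerivAt_id η₀)
  have h : HasFDerivAt (fun η : Fin n → ℂ =>
      (2⁻¹ : ℂ) * (A.mulVec x ⬝ᵥ x) + dotCLM (B.mulVec x) η + (2⁻¹ : ℂ) * dotBil C η η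
        - dotCLM y η)
      (((0 : (Fin n → ℂ) →L[ℂ] ℂ) + dotCLM (B.mulVec x)) +
        (2⁻¹ : ℂ) • ((dotBil C).precompR (Fin n → ℂ) η₀ (ContinuousLinearMap.id ℂ (Fin n → ℂ)) +
          (dotBil C).precompL (Fin n → ℂ) (ContinuousLinearMap.id ℂ (Fin n → ℂ)) η₀)
        - dotCLM y) η₀ :=
    (((hasFDerivAt_const _ _).add ((dotCLM (B.mulVec x)).hasFDerivAt)).add
      (hquad.const_mul _)).sub ((dotCLM y).hasFDerivAt)
  convert h using 1
  · funext v; rfl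
  ext v
  simp only [ContinuousLinearMap.coe_sub', ContinuousLinearMap.coe_add',
    ContinuousLinearMap.coe_smul', Pi.sub_apply, Pi.add_apply, Pi.smul_apply,
    ContinuousLinearMap.zero_apply, ContinuousLinearMap.precompR_apply,
    ContinuousLinearMap.precompL_apply, ContinuousLinearMap.id_apply,
    ContinuousLinearMap.flip_apply, ContinuousLinearMap.compL_apply,
    ContinuousLinearMap.comp_apply, dotCLM_apply, dotBil_apply, smul_eq_mul]
  rw [sub_dotProduct, add_dotProduct, symm_dot' C hC v η₀]
  ring

lemma im_dot (u w : Fin n → ℂ) :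
    (u ⬝ᵥ w).im = (fun i => (u i).re) ⬝ᵥ (fun i => (w i).im)
      + (fun i => (u i).im) ⬝ᵥ (fun i => (w i).re) := by
  simp [dotProduct, Complex.im_sum, Complex.mul_im, Finset.sum_add_distrib]

lemma mulVec_re' (C : Matrix (Fin n) (Fin n) ℂ) (v : Fin n → ℂ) :
    (fun i => ((C *ᵥ v) i).re)
      = (C.map Complex.re) *ᵥ (fun i => (v i).re)
        - (C.map Complex.im) *ᵥ (fun i => (v i).im) := by
  funext i
  simp [mulVec, dotProduct, Complex.re_sum, Complex.mul_re, Finset.sum_sub_distrib]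

lemma mulVec_im' (C : Matrix (Fin n) (Fin n) ℂ) (v : Fin n → ℂ) :
    (fun i => ((C *ᵥ v) i).im)
      = (C.map Complex.im) *ᵥ (fun i => (v i).re)
        + (C.map Complex.re) *ᵥ (fun i => (v i).im) := by
  funext i
  simp [mulVec, dotProduct, Complex.im_sum, Complex.mul_im, Finset.sum_add_distrib]
  ring_nf

lemma posQ {Q : Matrix (Fin n) (Fin n) ℝ} (hQ : Q.PosDef) (a b : Fin n → ℝ)
    (h : ¬(a = 0 ∧ b = 0)) : 0 < a ⬝ᵥ Q *ᵥ a + b ⬝ᵥ Q *ᵥ b := by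
  have hsa : 0 ≤ a ⬝ᵥ Q *ᵥ a := by simpa using hQ.posSemidef.dotProduct_mulVec_nonneg a
  have hsb : 0 ≤ b ⬝ᵥ Q *ᵥ b := by simpa using hQ.posSemidef.dotProduct_mulVec_nonneg b
  rcases not_and_or.mp h with ha | hb
  · have := hQ.dotProduct_mulVec_pos ha; simp only [star_trivial] at this; linarith
  · have := hQ.dotProduct_mulVec_pos hb; simp only [star_trivial] at this; linarith

lemma vec_ne (v : Fin n → ℂ) (hv : v ≠ 0) :
    ¬((fun i => (v i).re) = 0 ∧ (fun i => (v i).im) = 0) := by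
  rintro ⟨h1, h2⟩
  apply hv
  funext i
  have e1 := congrFun h1 i
  have e2 := congrFun h2 i
  simp only [Pi.zero_apply] at e1 e2 ⊢
  exact Complex.ext e1 e2

/-- a symmetric complex matrix with positive definite imaginary part is invertible. -/
lemma isUnit_of_im_posdef {C : Matrix (Fin n) (Fin n) ℂ} (hC : C.IsSymm)
    (hCim : (C.map Complex.im).PosDef) : IsUnit C := by
  rw [Matrix.isUnit_iff_isUnit_det, isUnit_iff_ne_zero]
  intro hdet
  obtain ⟨v, hv, hCv⟩ := Matrix.exists_mulVec_eq_zero_iff.mpr hdet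
  set a : Fin n → ℝ := fun i => (v i).re with ha
  set b : Fin n → ℝ := fun i => (v i).im with hb
  set P := C.map Complex.re
  set Q := C.map Complex.im
  have hPs : P.IsSymm := hC.map Complex.re
  have him : Q *ᵥ a + P *ᵥ b = 0 := by
    rw [← mulVec_im', hCv]; funext i; simp
  have hre : P *ᵥ a - Q *ᵥ b = 0 := by
    rw [← mulVec_re', hCv]; funext i; simp
  have h1 : Q *ᵥ a = -(P *ᵥ b) := by linear_combination (norm := module) him
  have h2 : Q *ᵥ b = P *ᵥ a := by linear_combination (norm := module) -hre
  have hz : a ⬝ᵥ Q *ᵥ a + b ⬝ᵥ Q *ᵥ b = 0 := by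
    rw [h1, h2, dotProduct_neg]
    rw [dotProduct_comm a (P *ᵥ b), symm_dot' P hPs b a, dotProduct_comm (P *ᵥ a) b]
    ring
  have := posQ hCim a b (vec_ne v hv)
  linarith

/-- the imaginary part of `-C⁻¹` is again positive definite. -/
lemma posdef_neg_inv {C : Matrix (Fin n) (Fin n) ℂ} (hC : C.IsSymm)
    (hCim : (C.map Complex.im).PosDef) : ((-C⁻¹).map Complex.im).PosDef := by
  have hCu := isUnit_of_im_posdef hC hCim
  have hdet : IsUnit C.det := (Matrix.isUnit_iff_isUnit_det C).mp hCu
  have hDs : (C⁻¹).IsSymm := by rw [Matrix.IsSymm, Matrix.transpose_nonsing_inv, hC.eq]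
  have hNs : (-C⁻¹).IsSymm := by rw [Matrix.IsSymm, Matrix.transpose_neg, hDs.eq]
  refine posDef_iff_dotProduct_mulVec.mpr ⟨hNs.map Complex.im, ?_⟩
  intro u hu
  simp only [star_trivial]
  set u' : Fin n → ℂ := fun i => (u i : ℂ) with hu'
  have hu'ne : u' ≠ 0 := by
    intro h; apply hu; funext i
    have := congrFun h i
    simpa [hu'] using this
  set v : Fin n → ℂ := C⁻¹ *ᵥ u' with hvdef
  have hCv : C *ᵥ v = u' := by
    rw [hvdef, mulVec_mulVec, Matrix.mul_nonsing_inv _ hdet, one_mulVec]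
  have hvne : v ≠ 0 := by
    intro h; apply hu'ne; rw [← hCv, h, mulVec_zero]
  set a : Fin n → ℝ := fun i => (v i).re with ha
  set b : Fin n → ℝ := fun i => (v i).im with hb
  set P := C.map Complex.re
  set Q := C.map Complex.im
  have hPs : P.IsSymm := hC.map Complex.re
  have htrans : u ⬝ᵥ ((-C⁻¹).map Complex.im) *ᵥ u = (u' ⬝ᵥ (-C⁻¹) *ᵥ u').im := by
    rw [im_dot]
    have hre0 : (fun i => (u' i).im) = 0 := by funext i; simp [hu']
    rw [hre0, zero_dotProduct, add_zero]
    have h2 : (fun i => (u' i).re) = u := by funext i; simp [hu']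
    rw [h2, mulVec_im', h2, hre0, mulVec_zero, add_zero]
  have hval : u' ⬝ᵥ (-C⁻¹) *ᵥ u' = -((C *ᵥ v) ⬝ᵥ v) := by
    have h1 : (-C⁻¹) *ᵥ u' = -v := by rw [neg_mulVec]
    rw [h1, dotProduct_neg, neg_inj]
    conv_lhs => rw [← hCv]
  have himCv : (fun i => ((C *ᵥ v) i).im) = 0 := by
    rw [hCv]; funext i; simp [hu']
  have hcon : Q *ᵥ a + P *ᵥ b = 0 := by rw [← mulVec_im', himCv]
  have hPb : P *ᵥ b = -(Q *ᵥ a) := by linear_combination (norm := module) hcon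
  have hkey : ((C *ᵥ v) ⬝ᵥ v).im = -(Q *ᵥ a ⬝ᵥ a) - (Q *ᵥ b ⬝ᵥ b) := by
    rw [im_dot, himCv, zero_dotProduct, add_zero, mulVec_re']
    rw [sub_dotProduct, symm_dot' P hPs a b, hPb, neg_dotProduct]
  rw [htrans, hval, Complex.neg_im, hkey]
  have hpos := posQ hCim a b (vec_ne v hvne)
  rw [dotProduct_comm a (Q *ᵥ a), dotProduct_comm b (Q *ᵥ b)] at hpos
  linarith

/-- value of the phase at the critical point. -/
lemma value_eq (A B C : Matrix (Fin n) (Fin n) ℂ) (hC : C.IsSymm) (hdet : IsUnit C.det)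
    (x y : Fin n → ℂ) :
    fbiPhase A B C x (C⁻¹ *ᵥ (y - B *ᵥ x)) - y ⬝ᵥ C⁻¹ *ᵥ (y - B *ᵥ x) =
      (2⁻¹ : ℂ) * ((A - Bᵀ * (C⁻¹ * B)) *ᵥ x ⬝ᵥ x) + ((C⁻¹ * B) *ᵥ x ⬝ᵥ y) +
        (2⁻¹ : ℂ) * ((-C⁻¹) *ᵥ y ⬝ᵥ y) := by
  have hDs : (C⁻¹).IsSymm := by rw [Matrix.IsSymm, Matrix.transpose_nonsing_inv, hC.eq]
  have hmm : ∀ u v : Fin n → ℂ, u ⬝ᵥ C⁻¹ *ᵥ v = C⁻¹ *ᵥ u ⬝ᵥ v := by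
    intro u v; rw [dotProduct_comm, symm_dot' C⁻¹ hDs v u]
  have hCη : C *ᵥ (C⁻¹ *ᵥ (y - B *ᵥ x)) = y - B *ᵥ x := by
    rw [mulVec_mulVec, Matrix.mul_nonsing_inv _ hdet, one_mulVec]
  simp only [fbiPhase, hCη]
  simp only [mulVec_sub, dotProduct_sub, sub_dotProduct, mulVec_mulVec, sub_mulVec,
    neg_mulVec, neg_dotProduct]
  have h1 : B *ᵥ x ⬝ᵥ C⁻¹ *ᵥ y = (C⁻¹ * B) *ᵥ x ⬝ᵥ y := by
    rw [hmm (B *ᵥ x) y, mulVec_mulVec]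
  have h2 : B *ᵥ x ⬝ᵥ (C⁻¹ * B) *ᵥ x = (Bᵀ * (C⁻¹ * B)) *ᵥ x ⬝ᵥ x := by
    rw [dotProduct_comm]
    conv_rhs => rw [← mulVec_mulVec, mulVec_transpose, ← dotProduct_mulVec]
  have h3 : y ⬝ᵥ C⁻¹ *ᵥ y = C⁻¹ *ᵥ y ⬝ᵥ y := hmm y y
  have h4 : y ⬝ᵥ (C⁻¹ * B) *ᵥ x = (C⁻¹ * B) *ᵥ x ⬝ᵥ y := dotProduct_comm _ _
  rw [h1, h2, h3, h4]
  ring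

end Stmt19Aux

open Stmt19Aux in
/-- Composing an FBI–Bargmann transform with the Fourier transform
yields an FBI–Bargmann transform: for each `(x,y)` the map `η ↦ φ(x,η) - y·η` has a
unique critical point, and the resulting critical value `ψ(x,y)` is a holomorphic
quadratic form admitting a decomposition `ψ(x,y) = ½(A'x)·x + (B'x)·y + ½(C'y)·y` with
`A', C'` symmetric, `B'` invertible (i.e. `ψ''_{xy}` invertible) and `Im C'` positive
definite (i.e. `Im ψ''_{yy}` positive definite). -/
theorem stmt_19 (n : ℕ) (hn : 1 ≤ n)
    (A B C : Matrix (Fin n) (Fin n) ℂ)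
    (hA : A.IsSymm) (hC : C.IsSymm) (hB : IsUnit B)
    (hCim : (C.map Complex.im).PosDef) :
    (∀ x y : Fin n → ℂ, ∃! η₀ : Fin n → ℂ,
        fderiv ℂ (fun η : Fin n → ℂ => fbiPhase A B C x η - y ⬝ᵥ η) η₀ = 0) ∧
    ∀ ηc : (Fin n → ℂ) → (Fin n → ℂ) → (Fin n → ℂ),
      (∀ x y : Fin n → ℂ,
        fderiv ℂ (fun η : Fin n → ℂ => fbiPhase A B C x η - y ⬝ᵥ η) (ηc x y) = 0) →
      ∃ A' B' C' : Matrix (Fin n) (Fin n) ℂ,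
        A'.IsSymm ∧ C'.IsSymm ∧ IsUnit B' ∧ (C'.map Complex.im).PosDef ∧
        ∀ x y : Fin n → ℂ,
          fbiPhase A B C x (ηc x y) - y ⬝ᵥ ηc x y =
            (2⁻¹ : ℂ) * (A'.mulVec x ⬝ᵥ x) + (B'.mulVec x ⬝ᵥ y) +
              (2⁻¹ : ℂ) * (C'.mulVec y ⬝ᵥ y) := by
  have hCu : IsUnit C := isUnit_of_im_posdef hC hCim
  have hdet : IsUnit C.det := (Matrix.isUnit_iff_isUnit_det C).mp hCu
  have hfd : ∀ x y η₀ : Fin n → ℂ,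
      fderiv ℂ (fun η : Fin n → ℂ => fbiPhase A B C x η - y ⬝ᵥ η) η₀
        = dotCLM (C *ᵥ η₀ + B *ᵥ x - y) :=
    fun x y η₀ => (hasFDerivAt_phase A B C hC x y η₀).fderiv
  have hcrit : ∀ x y η₀ : Fin n → ℂ,
      fderiv ℂ (fun η : Fin n → ℂ => fbiPhase A B C x η - y ⬝ᵥ η) η₀ = 0
        ↔ C *ᵥ η₀ = y - B *ᵥ x := by
    intro x y η₀
    rw [hfd]
    constructor
    · intro h
      have h0 := dotCLM_eq_zero h
      linear_combination (norm := module) h0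
    · intro h
      rw [h]
      have h0 : y - B *ᵥ x + B *ᵥ x - y = (0 : Fin n → ℂ) := by
        linear_combination (norm := module) (0 : Fin n → ℂ) = 0
      rw [h0, dotCLM_zero]
  constructor
  · intro x y
    refine ⟨C⁻¹ *ᵥ (y - B *ᵥ x), ?_, ?_⟩
    · exact (hcrit x y _).mpr
        (by rw [mulVec_mulVec, Matrix.mul_nonsing_inv _ hdet, one_mulVec])
    · intro η hη
      have h := (hcrit x y η).mp hη
      rw [← h, mulVec_mulVec, Matrix.nonsing_inv_mul _ hdet, one_mulVec]
  · intro ηc hηc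
    have hηeq : ∀ x y : Fin n → ℂ, ηc x y = C⁻¹ *ᵥ (y - B *ᵥ x) := by
      intro x y
      have h := (hcrit x y (ηc x y)).mp (hηc x y)
      rw [← h, mulVec_mulVec, Matrix.nonsing_inv_mul _ hdet, one_mulVec]
    have hDs : (C⁻¹).IsSymm := by
      rw [Matrix.IsSymm, Matrix.transpose_nonsing_inv, hC.eq]
    refine ⟨A - Bᵀ * (C⁻¹ * B), C⁻¹ * B, -C⁻¹, ?_, ?_, ?_, posdef_neg_inv hC hCim, ?_⟩
    · rw [Matrix.IsSymm, transpose_sub, hA.eq, transpose_mul, transpose_mul,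
        transpose_transpose, hDs.eq, Matrix.mul_assoc]
    · rw [Matrix.IsSymm, Matrix.transpose_neg, hDs.eq]
    · rw [Matrix.isUnit_iff_isUnit_det, Matrix.det_mul]
      have h1 : IsUnit (C⁻¹).det := by
        rw [Matrix.det_nonsing_inv, isUnit_iff_ne_zero, Ring.inverse_eq_inv']
        exact inv_ne_zero (isUnit_iff_ne_zero.mp hdet)
      exact h1.mul ((Matrix.isUnit_iff_isUnit_det B).mp hB)
    · intro x y
      rw [hηeq]
      exact value_eq A B C hC hdet x y

end
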